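/- In the single-player type space with Ω = [0,1], 𝒜 = ℳ the field generated by the intervals [0,1/2ⁿ] for n ∈ ℕ, and type function t(ω,·) = δ_{1/2ⁿ} for ω ∈ (1/2^{n+1}, 1/2ⁿ] and t(0,·) = δ₀: each set [0,1/2ⁿ] is a common certainty component, but the intersection ⋂_{n∈ℕ}[0,1/2ⁿ] = {0} is not a common certainty component. -/
import Mathlib

/-- The field of sets generated by a family `G`. -/
inductive genField {α : Type*} (G : Set (Set α)) : Set α → Prop
  | basic {A} : A ∈ G → genField G A
  | univ : genField G Set.univ
  | compl {A} : genField G A → genField G Aᶜ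
  | union {A B} : genField G A → genField G B → genField G (A ∪ B)

/-- The state space `Ω = [0,1]`. -/
abbrev Ω15 : Type := Set.Icc (0 : ℝ) 1

/-- The Dirac probability charge at `x`. -/
noncomputable def dirac15 (x : Ω15) (E : Set Ω15) : ℝ := E.indicator (fun _ => (1 : ℝ)) x

/-- The generating sets `[0, 1/2ⁿ]`. -/
def I15 (n : ℕ) : Set Ω15 := {ω | (ω : ℝ) ≤ (1 / 2) ^ n}

/-- The generators of the field `𝒜 = ℳ`. -/
def G15 : Set (Set Ω15) := Set.range I15

/-- The state `0 ∈ [0,1]`. -/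
noncomputable def zero15 : Ω15 := ⟨0, by norm_num⟩

/-- The state `1/2ⁿ ∈ [0,1]`. -/
noncomputable def pt15 (n : ℕ) : Ω15 :=
  ⟨(1 / 2) ^ n, ⟨by positivity, pow_le_one₀ (by norm_num) (by norm_num)⟩⟩

/-- `S` is a common certainty component of the single-player type space with field
generated by `G15` and type function `t`. -/
def IsCCC15 (t : Ω15 → Set Ω15 → ℝ) (S : Set Ω15) : Prop :=
  S.Nonempty ∧ ∃ E, genField G15 E ∧ E ⊆ S ∧ ∀ ω ∈ S, t ω E = 1

lemma I15_mono {m n : ℕ} (h : m ≤ n) : I15 n ⊆ I15 m := by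
  intro ω hω
  simp only [I15, Set.mem_setOf_eq] at *
  exact le_trans hω (pow_le_pow_of_le_one (by norm_num : (0:ℝ) ≤ 1/2) (by norm_num) h)

lemma genField_tail {E : Set Ω15} (hE : genField G15 E) :
    ∃ n, I15 n ⊆ E ∨ I15 n ⊆ Eᶜ := by
  induction hE with
  | basic h => obtain ⟨m, rfl⟩ := h; exact ⟨m, Or.inl subset_rfl⟩
  | univ => exact ⟨0, Or.inl (Set.subset_univ _)⟩
  | compl _ ih =>
      obtain ⟨n, h | h⟩ := ih
      · exact ⟨n, Or.inr (by simpa using h)⟩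
      · exact ⟨n, Or.inl h⟩
  | union _ _ ihA ihB =>
      obtain ⟨n₁, hA | hA⟩ := ihA
      · exact ⟨n₁, Or.inl (hA.trans Set.subset_union_left)⟩
      · obtain ⟨n₂, hB | hB⟩ := ihB
        · exact ⟨n₂, Or.inl (hB.trans Set.subset_union_right)⟩
        · refine ⟨max n₁ n₂, Or.inr ?_⟩
          rw [Set.compl_union]
          exact Set.subset_inter ((I15_mono (le_max_left _ _)).trans hA)
            ((I15_mono (le_max_right _ _)).trans hB)

/-- every positive ω has its dyadic level -/
lemma find_level (x : ℝ) (hx0 : 0 < x) (hx1 : x ≤ 1) :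
    ∃ m, (1/2:ℝ)^(m+1) < x ∧ x ≤ (1/2)^m := by
  have hex : ∃ k, (1/2:ℝ)^(k+1) < x := by
    obtain ⟨k, hk⟩ := exists_pow_lt_of_lt_one hx0 (by norm_num : (1/2:ℝ) < 1)
    exact ⟨k, lt_of_le_of_lt (pow_le_pow_of_le_one (by norm_num) (by norm_num) (Nat.le_succ k)) hk⟩
  classical
  let m := Nat.find hex
  refine ⟨m, Nat.find_spec hex, ?_⟩
  rcases Nat.eq_zero_or_pos m with h | h
  · simpa [h] using hx1
  · have := Nat.find_min hex (Nat.sub_lt h one_pos)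
    push_neg at this
    have : x ≤ (1/2:ℝ)^(m - 1 + 1) := this
    simpa [Nat.sub_add_cancel h] using this

/-- with `t(ω) = δ_{1/2ⁿ}` for `ω ∈ (1/2^{n+1}, 1/2ⁿ]` and `t(0) = δ₀`,
each `[0,1/2ⁿ]` is a common certainty component, while `⋂ₙ [0,1/2ⁿ] = {0}` is nonempty
but is not a common certainty component. -/
theorem stmt_15 (t : Ω15 → Set Ω15 → ℝ)
    (h0 : t zero15 = dirac15 zero15)
    (hn : ∀ (n : ℕ) (ω : Ω15), (ω : ℝ) ∈ Set.Ioc ((1 / 2 : ℝ) ^ (n + 1)) ((1 / 2) ^ n) →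
      t ω = dirac15 (pt15 n)) :
    (∀ n, IsCCC15 t (I15 n)) ∧
    (⋂ n, I15 n) = {zero15} ∧
    ¬ IsCCC15 t (⋂ n, I15 n) := by
  have hzero_mem : ∀ n, zero15 ∈ I15 n := by
    intro n; simp only [I15, Set.mem_setOf_eq, zero15]; positivity
  refine ⟨?_, ?_, ?_⟩
  · intro n
    refine ⟨⟨zero15, hzero_mem n⟩, I15 n, genField.basic ⟨n, rfl⟩, subset_rfl, ?_⟩
    intro ω hω
    rcases eq_or_lt_of_le ω.2.1 with h | h
    · have : ω = zero15 := Subtype.ext h.symm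
      subst this
      rw [h0, dirac15, Set.indicator_of_mem (hzero_mem n)]
    · obtain ⟨m, hm1, hm2⟩ := find_level ω h ω.2.2
      rw [hn m ω ⟨hm1, hm2⟩, dirac15, Set.indicator_of_mem]
      have hmn : m + 1 > n := by
        by_contra hc
        push_neg at hc
        have hle : (ω:ℝ) ≤ (1/2)^(n:ℕ) := hω
        exact absurd (le_trans hle
          (pow_le_pow_of_le_one (by norm_num : (0:ℝ) ≤ 1/2) (by norm_num) hc)) (not_le.2 hm1)
      show ((1/2:ℝ)^m) ≤ (1/2)^n
      exact pow_le_pow_of_le_one (by norm_num) (by norm_num) (Nat.lt_succ_iff.mp hmn)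
  · ext ω
    simp only [Set.mem_iInter, Set.mem_singleton_iff]
    constructor
    · intro h
      have : (ω : ℝ) ≤ 0 := by
        by_contra hc
        push_neg at hc
        obtain ⟨k, hk⟩ := exists_pow_lt_of_lt_one hc (by norm_num : (1/2:ℝ) < 1)
        exact absurd (h k) (not_le.2 hk)
      exact Subtype.ext (le_antisymm this ω.2.1)
    · rintro rfl n; exact hzero_mem n
  · rintro ⟨-, E, hgen, hsub, hall⟩
    have hInt : (⋂ n, I15 n) = {zero15} := by
      ext ω
      simp only [Set.mem_iInter, Set.mem_singleton_iff]
      constructor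
      · intro h
        have : (ω : ℝ) ≤ 0 := by
          by_contra hc
          push_neg at hc
          obtain ⟨k, hk⟩ := exists_pow_lt_of_lt_one hc (by norm_num : (1/2:ℝ) < 1)
          exact absurd (h k) (not_le.2 hk)
        exact Subtype.ext (le_antisymm this ω.2.1)
      · rintro rfl n; exact hzero_mem n
    rw [hInt] at hsub hall
    have ht := hall zero15 rfl
    rw [h0, dirac15] at ht
    have hz : zero15 ∈ E := by
      by_contra hc
      rw [Set.indicator_of_notMem hc] at ht
      norm_num at ht
    obtain ⟨n, h | h⟩ := genField_tail hgen
    · have : pt15 n = zero15 := hsub (h (le_refl ((1/2:ℝ)^n) : pt15 n ∈ I15 n))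
      have : ((1/2:ℝ)^n) = 0 := congrArg Subtype.val this
      have h2 : (0:ℝ) < (1/2)^n := by positivity
      linarith
    · exact h (hzero_mem n) hz
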